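/- Let G be a finite graph, L a 4-assignment for G, and α, β L-colorings of G such that no L-recoloring sequence recoloring each vertex at most 14 times transforms α into β, while for every graph H with fewer vertices than G, every 4-assignment L' for H, and all L'-colorings α', β' of H, some L'-recoloring sequence recoloring each vertex at most 14 times transforms α' into β'. Then G is connected and every vertex of G has degree at least 2. -/

import Mathlib

variable {V : Type} [Fintype V] [DecidableEq V]

/-- Apply a list of recoloring steps (vertex, new color) to a coloring, one by one. -/
def applySteps (α : V → ℕ) : List (V × ℕ) → (V → ℕ)
  | [] => α
  | q :: σ => applySteps (Function.update α q.1 q.2) σ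

/-- `f` is a proper `L`-coloring of the subgraph of `G` induced on the vertex set `s`. -/
def ProperOn (G : SimpleGraph V) (L : V → Finset ℕ) (s : Set V) (f : V → ℕ) : Prop :=
  (∀ v ∈ s, f v ∈ L v) ∧ ∀ u ∈ s, ∀ v ∈ s, G.Adj u v → f u ≠ f v

/-- `σ` is an `L`-recoloring sequence for the subgraph of `G` induced on `s`,
starting from the coloring `α`: every step recolors a vertex of `s`, and every
intermediate coloring (including the initial and final ones) is a proper
`L`-coloring of the induced subgraph. -/
def RecolSeqOn (G : SimpleGraph V) (L : V → Finset ℕ) (s : Set V) (α : V → ℕ)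
    (σ : List (V × ℕ)) : Prop :=
  (∀ q ∈ σ, q.1 ∈ s) ∧ ∀ n ≤ σ.length, ProperOn G L s (applySteps α (σ.take n))

/-- The number of times the recoloring sequence `σ` recolors the vertex `v`. -/
def recolors (σ : List (V × ℕ)) (v : V) : ℕ :=
  σ.countP (fun q => decide (q.1 = v))

set_option linter.unusedSectionVars false

/- ## helpers -/

@[simp] lemma applySteps_nil (α : V → ℕ) : applySteps α ([] : List (V × ℕ)) = α := rfl

lemma applySteps_cons (α : V → ℕ) (q : V × ℕ) (σ : List (V × ℕ)) :
    applySteps α (q :: σ) = applySteps (Function.update α q.1 q.2) σ := rfl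

lemma applySteps_append (α : V → ℕ) (σ τ : List (V × ℕ)) :
    applySteps α (σ ++ τ) = applySteps (applySteps α σ) τ := by
  induction σ generalizing α with
  | nil => rfl
  | cons q σ ih => simp [applySteps_cons, ih]

lemma applySteps_notin (α : V → ℕ) (σ : List (V × ℕ)) (w : V)
    (h : ∀ q ∈ σ, q.1 ≠ w) : applySteps α σ w = α w := by
  induction σ generalizing α with
  | nil => rfl
  | cons q σ ih =>
    rw [applySteps_cons, ih _ (fun q hq => h q (List.mem_cons_of_mem _ hq)),
      Function.update_of_ne]
    exact fun hc => h q (List.mem_cons_self) (hc ▸ rfl)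

lemma applySteps_update_comm (α : V → ℕ) (σ : List (V × ℕ)) (x : V) (c : ℕ)
    (h : ∀ q ∈ σ, q.1 ≠ x) :
    applySteps (Function.update α x c) σ = Function.update (applySteps α σ) x c := by
  induction σ generalizing α with
  | nil => rfl
  | cons q σ ih =>
    rw [applySteps_cons, Function.update_comm (fun hc : x = q.1 => h q (List.mem_cons_self) hc.symm),
      ih _ (fun q hq => h q (List.mem_cons_of_mem _ hq)), applySteps_cons]

lemma recolors_nil (w : V) : recolors ([] : List (V × ℕ)) w = 0 := rfl

lemma recolors_cons (q : V × ℕ) (σ : List (V × ℕ)) (w : V) :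
    recolors (q :: σ) w = recolors σ w + (if q.1 = w then 1 else 0) := by
  simp [recolors, List.countP_cons]

lemma recolors_append (σ τ : List (V × ℕ)) (w : V) :
    recolors (σ ++ τ) w = recolors σ w + recolors τ w := by
  simp [recolors, List.countP_append]

lemma properOn_congr {G : SimpleGraph V} {L : V → Finset ℕ} {s : Set V} {f g : V → ℕ}
    (h : ∀ x ∈ s, f x = g x) (hf : ProperOn G L s f) : ProperOn G L s g := by
  refine ⟨fun v hv => h v hv ▸ hf.1 v hv, fun u hu v hv hadj => ?_⟩
  rw [← h u hu, ← h v hv]; exact hf.2 u hu v hv hadj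

lemma properOn_mono {G : SimpleGraph V} {L : V → Finset ℕ} {s t : Set V} {f : V → ℕ}
    (h : t ⊆ s) (hf : ProperOn G L s f) : ProperOn G L t f :=
  ⟨fun v hv => hf.1 v (h hv), fun u hu v hv hadj => hf.2 u (h hu) v (h hv) hadj⟩

lemma recolSeqOn_nil_iff {G : SimpleGraph V} {L : V → Finset ℕ} {s : Set V} {α : V → ℕ} :
    RecolSeqOn G L s α [] ↔ ProperOn G L s α := by
  constructor
  · intro h; simpa using h.2 0 (by simp)
  · intro h
    exact ⟨by simp, fun n hn => by simpa using h⟩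

lemma recolSeqOn_cons_iff {G : SimpleGraph V} {L : V → Finset ℕ} {s : Set V} {α : V → ℕ}
    {q : V × ℕ} {σ : List (V × ℕ)} :
    RecolSeqOn G L s α (q :: σ) ↔
      q.1 ∈ s ∧ ProperOn G L s α ∧ RecolSeqOn G L s (Function.update α q.1 q.2) σ := by
  constructor
  · intro h
    refine ⟨h.1 q (List.mem_cons_self), by simpa using h.2 0 (by simp), ?_, ?_⟩
    · exact fun p hp => h.1 p (List.mem_cons_of_mem _ hp)
    · intro n hn
      have := h.2 (n+1) (by simpa using Nat.succ_le_succ hn)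
      simpa [applySteps_cons] using this
  · rintro ⟨h1, h2, h3⟩
    refine ⟨?_, ?_⟩
    · intro p hp
      rcases List.mem_cons.mp hp with h | h
      · exact h ▸ h1
      · exact h3.1 p h
    · intro n hn
      cases n with
      | zero => simpa using h2
      | succ m =>
        have := h3.2 m (by simpa using hn)
        simpa [applySteps_cons] using this

lemma recolSeqOn_final {G : SimpleGraph V} {L : V → Finset ℕ} {s : Set V} {α : V → ℕ}
    {σ : List (V × ℕ)} (h : RecolSeqOn G L s α σ) : ProperOn G L s (applySteps α σ) := by
  have := h.2 σ.length le_rfl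
  simpa using this

lemma recolSeqOn_append {G : SimpleGraph V} {L : V → Finset ℕ} {s : Set V} {α : V → ℕ}
    {σ τ : List (V × ℕ)} (h1 : RecolSeqOn G L s α σ)
    (h2 : RecolSeqOn G L s (applySteps α σ) τ) : RecolSeqOn G L s α (σ ++ τ) := by
  induction σ generalizing α with
  | nil => simpa using h2
  | cons q σ ih =>
    rw [recolSeqOn_cons_iff] at h1
    rw [List.cons_append, recolSeqOn_cons_iff]
    exact ⟨h1.1, h1.2.1, ih h1.2.2 h2⟩

/- ## lifting from a subtype -/

lemma lift_applySteps (s : Finset V) (τ : List ({x // x ∈ s} × ℕ)) (f : V → ℕ) :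
    (fun x : {x // x ∈ s} => applySteps f (τ.map (fun q => ((q.1 : V), q.2))) x.val)
      = applySteps (fun x : {x // x ∈ s} => f x.val) τ := by
  induction τ generalizing f with
  | nil => rfl
  | cons a τ ih =>
    simp only [List.map_cons, applySteps_cons]
    rw [ih (Function.update f a.1.val a.2)]
    have he : (fun x : {x // x ∈ s} => Function.update f a.1.val a.2 x.val)
        = Function.update (fun x : {x // x ∈ s} => f x.val) a.1 a.2 := by
      funext x
      by_cases hx : x = a.1
      · subst hx; simp
      · rw [Function.update_of_ne hx, Function.update_of_ne]
        exact fun hc => hx (Subtype.ext hc)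
    rw [he]

lemma lift_notin (s : Finset V) (τ : List ({x // x ∈ s} × ℕ)) (f : V → ℕ) (w : V)
    (hw : w ∉ s) : applySteps f (τ.map (fun q => ((q.1 : V), q.2))) w = f w := by
  apply applySteps_notin
  intro q hq
  rcases List.mem_map.mp hq with ⟨a, _, rfl⟩
  exact fun hc => hw (hc ▸ a.1.2)

lemma lift_recolors_mem (s : Finset V) (τ : List ({x // x ∈ s} × ℕ)) (w : V) (hw : w ∈ s) :
    recolors (τ.map (fun q => ((q.1 : V), q.2))) w = recolors τ ⟨w, hw⟩ := by
  induction τ with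
  | nil => rfl
  | cons a τ ih =>
    simp only [List.map_cons, recolors_cons, ih]
    congr 1
    by_cases h : a.1 = ⟨w, hw⟩
    · simp [h]
    · rw [if_neg h, if_neg]
      exact fun hc => h (Subtype.ext hc)

lemma lift_recolors_notin (s : Finset V) (τ : List ({x // x ∈ s} × ℕ)) (w : V) (hw : w ∉ s) :
    recolors (τ.map (fun q => ((q.1 : V), q.2))) w = 0 := by
  induction τ with
  | nil => rfl
  | cons a τ ih =>
    simp only [List.map_cons, recolors_cons, ih]
    rw [if_neg (show ¬(a.1.val = w) from fun hc => hw (hc ▸ a.1.2))]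

lemma sub_recolor (G : SimpleGraph V) [DecidableRel G.Adj]
    (L : V → Finset ℕ) (hL : ∀ v, (L v).card = 4)
    (hmin : ∀ (W : Type) [Fintype W] [DecidableEq W] (H : SimpleGraph W),
      Fintype.card W < Fintype.card V →
      ∀ L' : W → Finset ℕ, (∀ w, (L' w).card = 4) →
      ∀ α' β' : W → ℕ, ProperOn H L' Set.univ α' → ProperOn H L' Set.univ β' →
      ∃ σ : List (W × ℕ),
        RecolSeqOn H L' Set.univ α' σ ∧ applySteps α' σ = β' ∧
        ∀ w, recolors σ w ≤ 14)
    (s : Finset V) (hs : ∃ x, x ∉ s)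
    (α β : V → ℕ) (hα : ProperOn G L ↑s α) (hβ : ProperOn G L ↑s β) :
    ∃ σ : List (V × ℕ),
      RecolSeqOn G L ↑s α σ ∧ (∀ w ∈ s, applySteps α σ w = β w) ∧
      (∀ w ∉ s, applySteps α σ w = α w) ∧
      (∀ w, recolors σ w ≤ 14) ∧ (∀ w ∉ s, recolors σ w = 0) := by
  classical
  set W := {x // x ∈ s}
  set H : SimpleGraph W := G.comap (fun x : W => x.val) with hH
  have hcard : Fintype.card W < Fintype.card V := by
    have h1 : Fintype.card W = s.card := Fintype.card_coe s
    have h2 : s ⊂ Finset.univ := Finset.ssubset_univ_iff.mpr (by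
      intro he; rcases hs with ⟨x, hx⟩; exact hx (he ▸ Finset.mem_univ x))
    have := Finset.card_lt_card h2
    rw [Finset.card_univ] at this; omega
  have hlift_proper : ∀ g : V → ℕ, ProperOn G L ↑s g ↔
      ProperOn H (fun w : W => L w.val) Set.univ (fun x : W => g x.val) := by
    intro g
    constructor
    · intro h
      refine ⟨fun x _ => h.1 x.val x.2, fun x _ y _ hadj => ?_⟩
      exact h.2 x.val x.2 y.val y.2 hadj
    · intro h
      refine ⟨fun x hx => h.1 ⟨x, hx⟩ (Set.mem_univ _), fun x hx y hy hadj => ?_⟩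
      exact h.2 ⟨x, hx⟩ (Set.mem_univ _) ⟨y, hy⟩ (Set.mem_univ _) hadj
  obtain ⟨τ, hτ, hτfin, hτrec⟩ := hmin W H hcard (fun w => L w.val) (fun w => hL w.val)
    (fun x => α x.val) (fun x => β x.val) ((hlift_proper α).mp hα) ((hlift_proper β).mp hβ)
  refine ⟨τ.map (fun q => ((q.1 : V), q.2)), ⟨?_, ?_⟩, ?_, ?_, ?_, ?_⟩
  · intro q hq
    rcases List.mem_map.mp hq with ⟨a, _, rfl⟩
    exact a.1.2
  · intro n hn
    rw [List.length_map] at hn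
    rw [← List.map_take]
    apply (hlift_proper _).mpr
    rw [lift_applySteps]
    exact hτ.2 n hn
  · intro w hw
    have := congrFun (lift_applySteps s τ α) ⟨w, hw⟩
    simp only at this
    rw [this, hτfin]
  · exact fun w hw => lift_notin s τ α w hw
  · intro w
    by_cases hw : w ∈ s
    · rw [lift_recolors_mem s τ w hw]; exact hτrec _
    · rw [lift_recolors_notin s τ w hw]; omega
  · exact fun w hw => lift_recolors_notin s τ w hw

/- ## combining across a split with no cross edges -/

lemma properOn_univ_of_split {G : SimpleGraph V} {L : V → Finset ℕ} {s : Set V} {f : V → ℕ}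
    (hcross : ∀ x ∈ s, ∀ y ∉ s, ¬ G.Adj x y)
    (h1 : ProperOn G L s f) (h2 : ProperOn G L sᶜ f) : ProperOn G L Set.univ f := by
  constructor
  · intro x _
    by_cases hx : x ∈ s
    · exact h1.1 x hx
    · exact h2.1 x hx
  · intro x _ y _ hadj
    by_cases hx : x ∈ s <;> by_cases hy : y ∈ s
    · exact h1.2 x hx y hy hadj
    · exact absurd hadj (hcross x hx y hy)
    · exact absurd hadj.symm (hcross y hy x hx)
    · exact h2.2 x hx y hy hadj

lemma recolSeqOn_univ_of_cross {G : SimpleGraph V} {L : V → Finset ℕ} {s : Set V} {f : V → ℕ}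
    {σ : List (V × ℕ)}
    (hcross : ∀ x ∈ s, ∀ y ∉ s, ¬ G.Adj x y)
    (hc : ProperOn G L sᶜ f)
    (h : RecolSeqOn G L s f σ) : RecolSeqOn G L Set.univ f σ := by
  refine ⟨fun q _ => Set.mem_univ _, fun n hn => ?_⟩
  have hfix : ∀ x ∈ sᶜ, f x = applySteps f (σ.take n) x := by
    intro x hx
    rw [applySteps_notin]
    intro q hq hc'
    exact hx (hc' ▸ h.1 q (List.take_subset n σ hq))
  exact properOn_univ_of_split hcross (h.2 n hn) (properOn_congr hfix hc)

/- ## degree one: interleaving machinery -/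

noncomputable def pickAvoid (S bad : Finset ℕ) : ℕ := (S \ bad).toList.headI

lemma pickAvoid_spec {S bad : Finset ℕ} (h : (S \ bad).Nonempty) : pickAvoid S bad ∈ S \ bad := by
  unfold pickAvoid
  cases hl : (S \ bad).toList with
  | nil =>
    exfalso
    rw [Finset.toList_eq_nil] at hl
    exact Finset.nonempty_iff_ne_empty.mp h hl
  | cons a l =>
    have : a ∈ (S \ bad).toList := hl ▸ List.mem_cons_self
    simpa using Finset.mem_toList.mp this

lemma sdiff_three_nonempty {S : Finset ℕ} (hS : S.card = 4) (a b c : ℕ) :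
    (S \ {a, b, c}).Nonempty := by
  have hb : ({a, b, c} : Finset ℕ).card ≤ 3 := by
    apply le_trans (Finset.card_insert_le _ _)
    apply Nat.succ_le_succ
    apply le_trans (Finset.card_insert_le _ _)
    simp
  rw [← Finset.card_pos]
  have := Finset.le_card_sdiff ({a, b, c} : Finset ℕ) S
  omega

def nextUColor (u : V) : List (V × ℕ) → Option ℕ
  | [] => none
  | q :: σ => if q.1 = u then some q.2 else nextUColor u σ

noncomputable def inter (L : V → Finset ℕ) (u v : V) (bv : ℕ) : (V → ℕ) → List (V × ℕ) → List (V × ℕ)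
  | f, [] => if f v = bv then [] else [(v, bv)]
  | f, q :: σ =>
    if q.1 = u ∧ q.2 = f v then
      (v, pickAvoid (L v) {f u, q.2, (nextUColor u σ).getD q.2}) :: q ::
        inter L u v bv
          (Function.update (Function.update f v
            (pickAvoid (L v) {f u, q.2, (nextUColor u σ).getD q.2})) q.1 q.2) σ
    else q :: inter L u v bv (Function.update f q.1 q.2) σ

lemma properOn_univ_extend {G : SimpleGraph V} {L : V → Finset ℕ} {u v : V}
    (hu : ∀ w, G.Adj v w → w = u) {f : V → ℕ}
    (h1 : ProperOn G L {w | w ≠ v} f) (h2 : f v ∈ L v) (h3 : G.Adj v u → f v ≠ f u) :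
    ProperOn G L Set.univ f := by
  constructor
  · intro x _
    by_cases hx : x = v
    · exact hx ▸ h2
    · exact h1.1 x hx
  · intro x _ y _ hadj
    by_cases hx : x = v
    · subst hx
      have hy := hu y hadj
      subst hy
      exact h3 hadj
    · by_cases hy : y = v
      · subst hy
        have hx' := hu x hadj.symm
        subst hx'
        exact (h3 hadj.symm).symm
      · exact h1.2 x hx y hy hadj

lemma recolSeqOn_update_v {G : SimpleGraph V} {L : V → Finset ℕ} {v : V} {g : V → ℕ}
    {σ : List (V × ℕ)} (d : ℕ)
    (h : RecolSeqOn G L {w | w ≠ v} g σ) :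
    RecolSeqOn G L {w | w ≠ v} (Function.update g v d) σ := by
  refine ⟨h.1, fun n hn => ?_⟩
  have hnv : ∀ q ∈ σ.take n, q.1 ≠ v := fun q hq => h.1 q (List.take_subset n σ hq)
  rw [applySteps_update_comm _ _ _ _ hnv]
  apply properOn_congr (f := applySteps g (σ.take n)) _ (h.2 n hn)
  intro x hx
  rw [Function.update_of_ne hx]

lemma recolors_cons' (p : V) (c : ℕ) (σ : List (V × ℕ)) (w : V) :
    recolors ((p, c) :: σ) w = recolors σ w + if p = w then 1 else 0 :=
  recolors_cons (p, c) σ w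

lemma inter_spec (G : SimpleGraph V) [DecidableRel G.Adj] (L : V → Finset ℕ)
    (u v : V) (β : V → ℕ)
    (hLv : (L v).card = 4) (hβv : β v ∈ L v)
    (hu : ∀ w, G.Adj v w → w = u)
    (hβu : G.Adj v u → β u ≠ β v) :
    ∀ (σ : List (V × ℕ)) (f : V → ℕ),
      RecolSeqOn G L {w | w ≠ v} f σ →
      f v ∈ L v →
      (G.Adj v u → f v ≠ f u) →
      (G.Adj v u → applySteps f σ u = β u) →
      RecolSeqOn G L Set.univ f (inter L u v (β v) f σ) ∧
      (∀ w, w ≠ v → applySteps f (inter L u v (β v) f σ) w = applySteps f σ w) ∧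
      applySteps f (inter L u v (β v) f σ) v = β v ∧
      (∀ w, w ≠ v → recolors (inter L u v (β v) f σ) w = recolors σ w) ∧
      2 * recolors (inter L u v (β v) f σ) v ≤ recolors σ u + 3 ∧
      ((∀ c0, nextUColor u σ = some c0 → c0 ≠ f v) →
        2 * recolors (inter L u v (β v) f σ) v ≤ recolors σ u + 2) := by
  intro σ
  induction σ with
  | nil =>
    intro f h1 h2 h3 h4
    have hP0 : ProperOn G L {w | w ≠ v} f := recolSeqOn_nil_iff.mp h1
    have hPu : ProperOn G L Set.univ f := properOn_univ_extend hu hP0 h2 h3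
    by_cases hfv : f v = β v
    · rw [inter, if_pos hfv]
      exact ⟨recolSeqOn_nil_iff.mpr hPu, fun w _ => rfl, hfv, fun w _ => rfl,
        by simp [recolors_nil], fun _ => by simp [recolors_nil]⟩
    · rw [inter, if_neg hfv]
      have hfu : G.Adj v u → f u = β u := h4
      have hP1 : ProperOn G L Set.univ (Function.update f v (β v)) := by
        apply properOn_univ_extend hu
        · apply properOn_congr (f := f) _ hP0
          intro y hy
          rw [Function.update_of_ne hy]
        · simpa using hβv
        · intro hadj
          have huv : u ≠ v := fun h => (h ▸ hadj).ne rfl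
          rw [Function.update_self, Function.update_of_ne huv, hfu hadj]
          exact (hβu hadj).symm
      refine ⟨?_, ?_, ?_, ?_, ?_, ?_⟩
      · rw [recolSeqOn_cons_iff]
        exact ⟨Set.mem_univ _, hPu, recolSeqOn_nil_iff.mpr hP1⟩
      · intro w hw
        show Function.update f v (β v) w = f w
        rw [Function.update_of_ne hw]
      · show Function.update f v (β v) v = β v
        rw [Function.update_self]
      · intro w hw
        simp [recolors_cons', recolors_nil, Ne.symm hw]
      · simp [recolors_cons', recolors_nil]
      · intro _
        simp [recolors_cons', recolors_nil]
  | cons q tail ih =>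
    intro f h1 h2 h3 h4
    obtain ⟨p, c⟩ := q
    rw [recolSeqOn_cons_iff] at h1
    obtain ⟨hp, hP0, htail⟩ := h1
    have hpv : p ≠ v := hp
    have hPu : ProperOn G L Set.univ f := properOn_univ_extend hu hP0 h2 h3
    have hstepsne : ∀ q ∈ tail, q.1 ≠ v := fun q hq => htail.1 q hq
    by_cases hc : p = u ∧ c = f v
    · -- forced step
      obtain ⟨hpu, hcfv⟩ := hc
      have hup : u = p := hpu.symm
      subst hup
      have huv : u ≠ v := hpv
      set x := (nextUColor u tail).getD c with hx
      set d := pickAvoid (L v) {f u, c, x} with hd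
      have hdmem := pickAvoid_spec (sdiff_three_nonempty hLv (f u) c x)
      rw [← hd, Finset.mem_sdiff] at hdmem
      have hdL : d ∈ L v := hdmem.1
      have hdfu : d ≠ f u := fun h => hdmem.2 (by rw [h]; simp)
      have hdc : d ≠ c := fun h => hdmem.2 (by rw [h]; simp)
      have hdx : d ≠ x := fun h => hdmem.2 (by rw [h]; simp)
      set f2 := Function.update (Function.update f v d) u c with hf2
      set g := Function.update f u c with hg
      have hf2g : f2 = Function.update g v d := Function.update_comm (Ne.symm huv) d c f
      have hi : inter L u v (β v) f ((u, c) :: tail) =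
          (v, d) :: (u, c) :: inter L u v (β v) f2 tail := by
        rw [inter, if_pos ⟨rfl, hcfv⟩]
      have hcomm : applySteps f2 tail = Function.update (applySteps g tail) v d := by
        rw [hf2g]
        exact applySteps_update_comm g tail v d hstepsne
      have htail2 : RecolSeqOn G L {w | w ≠ v} f2 tail := by
        rw [hf2g]
        exact recolSeqOn_update_v d htail
      have hg4 : G.Adj v u → applySteps g tail u = β u := h4
      have h4' : G.Adj v u → applySteps f2 tail u = β u := by
        intro hadj
        rw [hcomm, Function.update_of_ne huv]
        exact hg4 hadj
      have hf2v : f2 v = d := by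
        rw [hf2, Function.update_of_ne (Ne.symm huv), Function.update_self]
      have hf2u : f2 u = c := by rw [hf2, Function.update_self]
      obtain ⟨i1, i2, i3, i4, i5, i6⟩ := ih f2 htail2 (hf2v ▸ hdL)
        (fun _ => by rw [hf2v, hf2u]; exact hdc) h4'
      have hP1 : ProperOn G L Set.univ (Function.update f v d) := by
        apply properOn_univ_extend hu
        · apply properOn_congr (f := f) _ hP0
          intro y hy
          rw [Function.update_of_ne hy]
        · simpa using hdL
        · intro hadj
          rw [Function.update_self, Function.update_of_ne huv]
          exact hdfu
      rw [hi]
      have hrecv : recolors ((v, d) :: (u, c) :: inter L u v (β v) f2 tail) v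
          = recolors (inter L u v (β v) f2 tail) v + 1 := by
        simp [recolors_cons', huv]
      have hrecu : recolors ((u, c) :: tail) u = recolors tail u + 1 := by
        simp [recolors_cons']
      have hB : ∀ c0, nextUColor u tail = some c0 → c0 ≠ f2 v := by
        intro c0 hc0 hc0'
        apply hdx
        rw [hf2v] at hc0'
        rw [hx, hc0, ← hc0']
        rfl
      have hi6 := i6 hB
      refine ⟨?_, ?_, ?_, ?_, ?_, ?_⟩
      · rw [recolSeqOn_cons_iff]
        refine ⟨Set.mem_univ _, hPu, ?_⟩
        rw [recolSeqOn_cons_iff]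
        exact ⟨Set.mem_univ _, hP1, i1⟩
      · intro w hw
        show applySteps f2 (inter L u v (β v) f2 tail) w = applySteps g tail w
        rw [i2 w hw, hcomm, Function.update_of_ne hw]
      · exact i3
      · intro w hw
        show recolors ((v, d) :: (u, c) :: inter L u v (β v) f2 tail) w
          = recolors ((u, c) :: tail) w
        rw [recolors_cons', recolors_cons', recolors_cons', i4 w hw,
          if_neg (show ¬ v = w from fun h => hw h.symm), add_zero]
      · rw [hrecv, hrecu]
        omega
      · intro hB2
        exfalso
        have hn : nextUColor u ((u, c) :: tail) = some c := by
          rw [nextUColor, if_pos rfl]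
        exact hB2 c hn hcfv
    · -- unforced step
      have hi : inter L u v (β v) f ((p, c) :: tail) =
          (p, c) :: inter L u v (β v) (Function.update f p c) tail := by
        rw [inter, if_neg hc]
      set f' := Function.update f p c with hf'
      have hf'v : f' v = f v := Function.update_of_ne (Ne.symm hpv) _ _
      have h2' : f' v ∈ L v := hf'v ▸ h2
      have h3' : G.Adj v u → f' v ≠ f' u := by
        intro hadj
        rw [hf'v]
        by_cases hpu : p = u
        · subst hpu
          have hcfv : ¬ c = f v := fun h => hc ⟨rfl, h⟩
          rw [hf', Function.update_self]
          exact fun h => hcfv h.symm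
        · rw [hf', Function.update_of_ne (Ne.symm hpu)]
          exact h3 hadj
      have h4' : G.Adj v u → applySteps f' tail u = β u := h4
      obtain ⟨i1, i2, i3, i4, i5, i6⟩ := ih f' htail h2' h3' h4'
      rw [hi]
      have hrecv : recolors ((p, c) :: inter L u v (β v) f' tail) v
          = recolors (inter L u v (β v) f' tail) v := by
        simp [recolors_cons', hpv]
      refine ⟨?_, ?_, ?_, ?_, ?_, ?_⟩
      · rw [recolSeqOn_cons_iff]
        exact ⟨Set.mem_univ _, hPu, i1⟩
      · intro w hw
        exact i2 w hw
      · exact i3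
      · intro w hw
        show recolors ((p, c) :: inter L u v (β v) f' tail) w
          = recolors ((p, c) :: tail) w
        rw [recolors_cons', recolors_cons', i4 w hw]
      · rw [hrecv, recolors_cons']
        have := i5
        by_cases hpu : p = u
        · rw [if_pos hpu]; omega
        · rw [if_neg hpu]; omega
      · intro hB2
        rw [hrecv, recolors_cons']
        by_cases hpu : p = u
        · rw [if_pos hpu]
          have := i5
          omega
        · rw [if_neg hpu]
          have hnext : nextUColor u ((p, c) :: tail) = nextUColor u tail := by
            rw [nextUColor, if_neg hpu]
          have := i6 (by
            intro c0 hc0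
            rw [hf'v]
            exact hB2 c0 (by rw [hnext]; exact hc0))
          omega

/-- Let `G` be a minimal counterexample for 14-good `L`-recoloring with
4-assignments: no 14-good `L`-recoloring sequence transforms `α` into `β`, while
every smaller graph, with any 4-assignment and any pair of colorings, admits one.
Then `G` is connected and has minimum degree at least 2. -/
theorem min_cex_connected_min_degree_two (G : SimpleGraph V) [DecidableRel G.Adj]
    (L : V → Finset ℕ) (hL : ∀ v, (L v).card = 4)
    (α β : V → ℕ)
    (hα : ProperOn G L Set.univ α) (hβ : ProperOn G L Set.univ β)
    (hno : ¬ ∃ σ : List (V × ℕ),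
      RecolSeqOn G L Set.univ α σ ∧ applySteps α σ = β ∧ ∀ v, recolors σ v ≤ 14)
    (hmin : ∀ (W : Type) [Fintype W] [DecidableEq W] (H : SimpleGraph W),
      Fintype.card W < Fintype.card V →
      ∀ L' : W → Finset ℕ, (∀ w, (L' w).card = 4) →
      ∀ α' β' : W → ℕ, ProperOn H L' Set.univ α' → ProperOn H L' Set.univ β' →
      ∃ σ : List (W × ℕ),
        RecolSeqOn H L' Set.univ α' σ ∧ applySteps α' σ = β' ∧
        ∀ w, recolors σ w ≤ 14)
    :
    G.Connected ∧ ∀ v, 2 ≤ G.degree v := by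
    classical
  have hne : Nonempty V := by
    by_contra h
    rw [not_nonempty_iff] at h
    apply hno
    refine ⟨[], ⟨by simp, ?_⟩, ?_, ?_⟩
    · intro n hn
      simpa [List.take_nil] using hα
    · funext w
      exact (h.false w).elim
    · intro w
      exact (h.false w).elim
  have hconn : G.Connected := by
    by_contra hcon
    rw [SimpleGraph.connected_iff] at hcon
    push_neg at hcon
    have hpre : ¬ G.Preconnected := fun h => (hcon h).false hne.some
    have h' : ¬ ∀ a b : V, G.Reachable a b := hpre
    push_neg at h'
    obtain ⟨u0, w0, hnr⟩ := h'
    set s : Finset V := Finset.univ.filter (fun x => G.Reachable u0 x) with hsdef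
    have hmem : ∀ x, x ∈ s ↔ G.Reachable u0 x := by intro x; simp [hsdef]
    have hu0 : u0 ∈ s := (hmem u0).mpr (SimpleGraph.Reachable.refl u0)
    have hw0 : w0 ∉ s := fun h => hnr ((hmem w0).mp h)
    have hcross : ∀ x ∈ (↑s : Set V), ∀ y ∉ (↑s : Set V), ¬ G.Adj x y := by
      intro x hx y hy hadj
      exact hy ((hmem y).mpr (((hmem x).mp hx).trans hadj.reachable))
    obtain ⟨σ1, hr1, hfin1, hfix1, hb1, hz1⟩ := sub_recolor G L hL hmin s ⟨w0, hw0⟩ α β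
      (properOn_mono (Set.subset_univ _) hα) (properOn_mono (Set.subset_univ _) hβ)
    set f1 := applySteps α σ1 with hf1
    have hP1c : ProperOn G L (↑s : Set V)ᶜ f1 := by
      apply properOn_congr (f := α) _ (properOn_mono (Set.subset_univ _) hα)
      intro x hx
      exact (hfix1 x (by simpa using hx)).symm
    have hscompl : (↑(sᶜ) : Set V) = (↑s : Set V)ᶜ := by simp [Finset.coe_compl]
    obtain ⟨σ2, hr2, hfin2, hfix2, hb2, hz2⟩ := sub_recolor G L hL hmin sᶜ
      ⟨u0, by simp [hu0]⟩ f1 β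
      (by rw [hscompl]; exact hP1c)
      (by rw [hscompl]; exact properOn_mono (Set.subset_univ _) hβ)
    have hR1 : RecolSeqOn G L Set.univ α σ1 :=
      recolSeqOn_univ_of_cross hcross (properOn_mono (Set.subset_univ _) hα) hr1
    have hcross2 : ∀ x ∈ (↑s : Set V)ᶜ, ∀ y ∉ (↑s : Set V)ᶜ, ¬ G.Adj x y := by
      intro x hx y hy hadj
      exact hcross y (by simpa using hy) x hx hadj.symm
    have hr2' : RecolSeqOn G L (↑s : Set V)ᶜ f1 σ2 := hscompl ▸ hr2
    have hP1s : ProperOn G L (↑s : Set V) f1 := recolSeqOn_final hr1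
    have hR2 : RecolSeqOn G L Set.univ f1 σ2 :=
      recolSeqOn_univ_of_cross hcross2 (by rw [compl_compl]; exact hP1s) hr2'
    apply hno
    refine ⟨σ1 ++ σ2, recolSeqOn_append hR1 hR2, ?_, ?_⟩
    · funext w
      rw [applySteps_append]
      by_cases hw : w ∈ s
      · rw [applySteps_notin f1 σ2 w ?_]
        · exact hfin1 w hw
        · intro q hq hqw
          have hq1 := hr2.1 q hq
          rw [hqw] at hq1
          simp only [Finset.coe_compl, Set.mem_compl_iff, Finset.mem_coe] at hq1
          exact hq1 hw
      · exact hfin2 w (by simpa using hw)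
    · intro w
      rw [recolors_append]
      by_cases hw : w ∈ s
      · have h1 := hz2 w (by simpa using hw)
        have h2 := hb1 w
        omega
      · have h1 := hz1 w hw
        have h2 := hb2 w
        omega
  refine ⟨hconn, ?_⟩
  intro v
  by_contra hdeg
  push_neg at hdeg
  have hcard1 : (G.neighborFinset v).card ≤ 1 := by
    have h := G.card_neighborFinset_eq_degree v
    omega
  have hex : ∃ u : V, ∀ w, G.Adj v w → w = u := by
    by_cases h : ∃ w, G.Adj v w
    · obtain ⟨u, hu⟩ := h
      refine ⟨u, fun w hw => ?_⟩
      have h1 : w ∈ G.neighborFinset v := by simpa using hw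
      have h2 : u ∈ G.neighborFinset v := by simpa using hu
      exact Finset.card_le_one.mp hcard1 _ h1 _ h2
    · push_neg at h
      exact ⟨v, fun w hw => absurd hw (h w)⟩
  obtain ⟨u, hu⟩ := hex
  have hβu : G.Adj v u → β u ≠ β v :=
    fun hadj => hβ.2 u (Set.mem_univ _) v (Set.mem_univ _) hadj.symm
  obtain ⟨σ', hr', hfin', hfix', hb', hz'⟩ := sub_recolor G L hL hmin (Finset.univ.erase v)
    ⟨v, by simp⟩ α β (properOn_mono (Set.subset_univ _) hα) (properOn_mono (Set.subset_univ _) hβ)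
  have hserase : (↑(Finset.univ.erase v) : Set V) = {w : V | w ≠ v} := by ext x; simp
  rw [hserase] at hr'
  have h4 : G.Adj v u → applySteps α σ' u = β u := by
    intro hadj
    have huv : u ≠ v := fun h => (h ▸ hadj).ne rfl
    exact hfin' u (by simp [huv])
  obtain ⟨s1, s2, s3, s4, s5, s6⟩ := inter_spec G L u v β (hL v) (hβ.1 v (Set.mem_univ _))
    hu hβu σ' α hr' (hα.1 v (Set.mem_univ _))
    (fun hadj => hα.2 v (Set.mem_univ _) u (Set.mem_univ _) hadj) h4
  apply hno
  refine ⟨inter L u v (β v) α σ', s1, ?_, ?_⟩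
  · funext w
    by_cases hw : w = v
    · rw [hw]; exact s3
    · rw [s2 w hw]
      exact hfin' w (by simp [hw])
  · intro w
    by_cases hw : w = v
    · subst hw
      have h1 := hb' u
      omega
    · rw [s4 w hw]
      exact hb' w
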